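/- arXiv:1705.00879 — 2 statements merged into one kernel-verified Lean document; each statement's English description precedes it below -/
import Mathlib

section
/- Let M ∈ ℤ^{d×d} be regular. The space of translates of the Dirichlet kernel coincides with the space of trigonometric polynomials with frequencies in the generating set: V_M^{D_M} = span{T(y)D_M : y ∈ P(M)} = span{ e^{i h·x} : h ∈ G(M^T) }. Consequently, approximation in V_M^{D_M} corresponds to truncation of Fourier series to the frequencies G(M^T). -/
open MeasureTheory Complex Matrix
open scoped BigOperators Classical

noncomputable section

namespace ElastFFT

variable (d : ℕ)

/-- Real action of an integer matrix on a real vector. -/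
def mulVecR (M : Matrix (Fin d) (Fin d) ℤ) (y : Fin d → ℝ) : Fin d → ℝ :=
  (M.map (Int.cast : ℤ → ℝ)).mulVec y

/-- The lattice Λ(M) = M⁻¹ ℤ^d. -/
def lattice (M : Matrix (Fin d) (Fin d) ℤ) : Set (Fin d → ℝ) :=
  {y | ∃ z : Fin d → ℤ, mulVecR d M y = fun i => (z i : ℝ)}

/-- The pattern P(M) = Λ(M) ∩ [-1/2, 1/2)^d. -/
def pattern (M : Matrix (Fin d) (Fin d) ℤ) : Set (Fin d → ℝ) :=
  {y | y ∈ lattice d M ∧ ∀ i, y i ∈ Set.Ico (-(1/2) : ℝ) (1/2)}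

/-- The generating set G(N) = ℤ^d ∩ N·[-1/2,1/2)^d. -/
def genSet (N : Matrix (Fin d) (Fin d) ℤ) : Set (Fin d → ℤ) :=
  {h | ∃ y : Fin d → ℝ, (∀ i, y i ∈ Set.Ico (-(1/2) : ℝ) (1/2)) ∧
        (fun i => (h i : ℝ)) = mulVecR d N y}

/-- The fundamental cell [-π, π)^d of the torus. -/
def cube : Set (Fin d → ℝ) := Set.univ.pi fun _ => Set.Ico (-Real.pi) Real.pi

/-- Pairing of an integer frequency and a real point. -/
def dot (k : Fin d → ℤ) (x : Fin d → ℝ) : ℝ := ∑ i, (k i : ℝ) * x i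

/-- A function on the torus: 2π-periodic in each coordinate. -/
def TorusFun (f : (Fin d → ℝ) → ℂ) : Prop :=
  ∀ (x : Fin d → ℝ) (z : Fin d → ℤ), f (x + fun i => 2 * Real.pi * (z i : ℝ)) = f x

/-- The L²(𝕋^d) inner product (normalised). -/
def torusInner (f g : (Fin d → ℝ) → ℂ) : ℂ :=
  (((2 * Real.pi) ^ d : ℝ) : ℂ)⁻¹ * ∫ x in cube d, f x * (starRingEnd ℂ) (g x)

/-- Fourier coefficient c_k(f). -/
def fCoeff (f : (Fin d → ℝ) → ℂ) (k : Fin d → ℤ) : ℂ :=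
  torusInner d f fun x => Complex.exp (Complex.I * (dot d k x : ℝ))

/-- Membership in the Wiener algebra A(𝕋^d). -/
def InWiener (f : (Fin d → ℝ) → ℂ) : Prop :=
  Summable (fun k : Fin d → ℤ => ‖fCoeff d f k‖) ∧
    ∀ x, HasSum (fun k : Fin d → ℤ =>
      fCoeff d f k * Complex.exp (Complex.I * (dot d k x : ℝ))) (f x)

/-- The translate T(y)f = f(· - 2πy). -/
def Tr (y : Fin d → ℝ) (f : (Fin d → ℝ) → ℂ) : (Fin d → ℝ) → ℂ :=
  fun x => f (x - (2 * Real.pi) • y)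

/-- The space of translates V_M^f, as a set of L² functions (a.e. equality on the cube). -/
def spanTranslates (M : Matrix (Fin d) (Fin d) ℤ) (f : (Fin d → ℝ) → ℂ) :
    Set ((Fin d → ℝ) → ℂ) :=
  {g | ∃ a : (Fin d → ℝ) → ℂ,
      g =ᵐ[volume.restrict (cube d)] fun x => ∑ᶠ y ∈ pattern d M, a y * Tr d y f x}

/-- Orthonormality of the translates of f on the pattern. -/
def OrthonormalTranslates (M : Matrix (Fin d) (Fin d) ℤ) (f : (Fin d → ℝ) → ℂ) : Prop :=
  ∀ y ∈ pattern d M, ∀ y' ∈ pattern d M,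
    torusInner d (Tr d y f) (Tr d y' f) = if y = y' then 1 else 0

/-- A fundamental interpolant of V_M^f. -/
def IsFundamentalInterpolant (M : Matrix (Fin d) (Fin d) ℤ) (f Λ : (Fin d → ℝ) → ℂ) : Prop :=
  Λ ∈ spanTranslates d M f ∧
    ∀ y ∈ pattern d M,
      Λ ((2 * Real.pi) • y) = if ∃ z : Fin d → ℤ, y = fun i => (z i : ℝ) then 1 else 0

/-- Frobenius inner product of complex matrices. -/
def frobInner (A B : Matrix (Fin d) (Fin d) ℂ) : ℂ :=
  ∑ i, ∑ j, A i j * (starRingEnd ℂ) (B i j)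

/-- Application of a fourth-order (real) tensor to a complex matrix. -/
def capply (C : Fin d → Fin d → Fin d → Fin d → ℝ) (γ : Matrix (Fin d) (Fin d) ℂ) :
    Matrix (Fin d) (Fin d) ℂ :=
  Matrix.of fun i j => ∑ a, ∑ b, (C i j a b : ℂ) * γ a b

/-- The usual symmetries of a stiffness tensor. -/
def TensorSymm (C : Fin d → Fin d → Fin d → Fin d → ℝ) : Prop :=
  ∀ i j k l, C i j k l = C j i k l ∧ C i j k l = C i j l k ∧ C i j k l = C k l i j

/-- Positive definiteness of a reference stiffness on symmetric matrices. -/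
def TensorPosDef (C : Fin d → Fin d → Fin d → Fin d → ℝ) : Prop :=
  ∃ c : ℝ, 0 < c ∧ ∀ γ : Matrix (Fin d) (Fin d) ℂ, γ.IsSymm →
    c * ∑ i, ∑ j, Complex.normSq (γ i j) ≤ (frobInner d (capply d C γ) γ).re

/-- The symmetrised gradient D_k u = (i/2)(k uᵀ + u kᵀ). -/
def symGrad (k : Fin d → ℝ) (u : Fin d → ℂ) : Matrix (Fin d) (Fin d) ℂ :=
  Matrix.of fun i j => (Complex.I / 2) * ((k i : ℂ) * u j + u i * (k j : ℂ))

/-- The adjoint D_k* of the symmetrised gradient (w.r.t. Frobenius inner product). -/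
def symGradAdj (k : Fin d → ℝ) (A : Matrix (Fin d) (Fin d) ℂ) : Fin d → ℂ :=
  fun j => ∑ i, (-Complex.I / 2) * (k i : ℂ) * (A i j + A j i)

/-- The acoustic tensor A(k) = D_k* ∘ C⁰ ∘ D_k as a d×d complex matrix. -/
def acoustic (C0 : Fin d → Fin d → Fin d → Fin d → ℝ) (k : Fin d → ℝ) :
    Matrix (Fin d) (Fin d) ℂ :=
  Matrix.of fun i j => symGradAdj d k (capply d C0 (symGrad d k (Pi.single j 1))) i

/-- The Green operator symbol Γ̂⁰_k = D_k ∘ A(k)⁻¹ ∘ D_k* for real k ≠ 0. -/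
def greenSymR (C0 : Fin d → Fin d → Fin d → Fin d → ℝ) (k : Fin d → ℝ)
    (E : Matrix (Fin d) (Fin d) ℂ) : Matrix (Fin d) (Fin d) ℂ :=
  symGrad d k ((acoustic d C0 k)⁻¹.mulVec (symGradAdj d k E))

/-- The Green operator symbol for integer frequencies, Γ̂⁰_0 := 0. -/
def greenSymZ (C0 : Fin d → Fin d → Fin d → Fin d → ℝ) (k : Fin d → ℤ)
    (E : Matrix (Fin d) (Fin d) ℂ) : Matrix (Fin d) (Fin d) ℂ :=
  if k = 0 then 0 else greenSymR d C0 (fun i => (k i : ℝ)) E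

/-- Entrywise Fourier coefficient of a matrix field. -/
def mFourier (ε : (Fin d → ℝ) → Matrix (Fin d) (Fin d) ℂ) (k : Fin d → ℤ) :
    Matrix (Fin d) (Fin d) ℂ :=
  Matrix.of fun i j => fCoeff d (fun x => ε x i j) k

/-- The periodised Green symbol Γ̂^p_h = m Σ_z Γ̂⁰_{h+Mᵀz} |c_{h+Mᵀz}(f)|². -/
def gammaPSym (M : Matrix (Fin d) (Fin d) ℤ) (C0 : Fin d → Fin d → Fin d → Fin d → ℝ)
    (f : (Fin d → ℝ) → ℂ) (h : Fin d → ℤ) (E : Matrix (Fin d) (Fin d) ℂ) :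
    Matrix (Fin d) (Fin d) ℂ :=
  (M.det.natAbs : ℂ) • ∑' z : Fin d → ℤ,
    ((Complex.normSq (fCoeff d f (h + Matrix.mulVec Mᵀ z)) : ℝ) : ℂ) •
      greenSymZ d C0 (h + Matrix.mulVec Mᵀ z) E

/-- The periodised Green operator applied to a coefficient field: DFT, multiply, inverse DFT. -/
def gammaP (M : Matrix (Fin d) (Fin d) ℤ) (C0 : Fin d → Fin d → Fin d → Fin d → ℝ)
    (f : (Fin d → ℝ) → ℂ) (V : (Fin d → ℝ) → Matrix (Fin d) (Fin d) ℂ)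
    (x : Fin d → ℝ) : Matrix (Fin d) (Fin d) ℂ :=
  ((M.det.natAbs : ℂ))⁻¹ • ∑ᶠ h ∈ genSet d Mᵀ,
    Complex.exp (2 * Real.pi * Complex.I * (dot d h x : ℝ)) •
      gammaPSym d M C0 f h
        (∑ᶠ y ∈ pattern d M, Complex.exp (-(2 * Real.pi * Complex.I) * (dot d h y : ℝ)) • V y)

/-- The Dirichlet kernel D_M. -/
def dirichlet (M : Matrix (Fin d) (Fin d) ℤ) : (Fin d → ℝ) → ℂ :=
  fun x => ∑ᶠ h ∈ genSet d Mᵀ, Complex.exp (Complex.I * (dot d h x : ℝ))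

/-! Translating `D_M` by `2πy` multiplies its `h`-th Fourier coefficient by `exp (-2πi h·y)`, so a
combination `∑_{y ∈ P(M)} a_y T(y) D_M` is the trigonometric polynomial with coefficients
`b_h = ∑_y a_y exp (-2πi h·y)`, `h ∈ G(Mᵀ)`. Every `b` arises this way because the rows of the
matrix `(exp (-2πi h·y))_{h,y}` are orthogonal: `P(M)` represents `Λ(M)/ℤ^d`, on which
`y ↦ exp (2πi k·y)` is a character that is trivial exactly when `k ∈ Mᵀℤ^d`, and distinct elements
of `G(Mᵀ)` are incongruent modulo `Mᵀℤ^d`. -/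

section

variable {d}

open Real

lemma eq_of_mem_box_of_sub_eq_intCast {y y' : Fin d → ℝ}
    (hy : ∀ i, y i ∈ Set.Ico (-(1/2) : ℝ) (1/2)) (hy' : ∀ i, y' i ∈ Set.Ico (-(1/2) : ℝ) (1/2))
    {z : Fin d → ℤ} (hz : y - y' = fun i => (z i : ℝ)) : y = y' := by
  funext i
  have hyi : y i = y' i + z i := by rw [← congrFun hz i]; simp
  have hzi : z i = 0 := by
    have := round_eq_zero_iff.2 (hy i)
    rwa [hyi, round_add_intCast, round_eq_zero_iff.2 (hy' i), zero_add] at this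
  simp [hyi, hzi]

def centeredFract (v : Fin d → ℝ) : Fin d → ℝ := fun i => v i - round (v i)

lemma centeredFract_mem_box (v : Fin d → ℝ) (i : Fin d) :
    centeredFract v i ∈ Set.Ico (-(1/2) : ℝ) (1/2) :=
  round_eq_zero_iff.1 (by simp [centeredFract, round_sub_intCast])

lemma centeredFract_eq_self {y : Fin d → ℝ} (hy : ∀ i, y i ∈ Set.Ico (-(1/2) : ℝ) (1/2)) :
    centeredFract y = y := by
  funext i
  simp [centeredFract, round_eq_zero_iff.2 (hy i)]

lemma centeredFract_centeredFract_add (v w : Fin d → ℝ) :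
    centeredFract (centeredFract v + w) = centeredFract (v + w) := by
  funext i
  simp only [centeredFract, Pi.add_apply]
  rw [show v i - round (v i) + w i = (v i + w i) - round (v i) by ring, round_sub_intCast]
  push_cast
  ring

lemma sub_centeredFract (v : Fin d → ℝ) :
    v - centeredFract v = fun i => ((round (v i) : ℤ) : ℝ) := by
  funext i
  simp [centeredFract]

lemma intCast_mulVec (N : Matrix (Fin d) (Fin d) ℤ) (w : Fin d → ℤ) :
    (fun i => ((N *ᵥ w) i : ℝ)) = mulVecR d N fun i => (w i : ℝ) :=
  funext fun i => (Int.castRingHom ℝ).map_mulVec N w i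

lemma add_mem_lattice {M : Matrix (Fin d) (Fin d) ℤ} {y y' : Fin d → ℝ}
    (hy : y ∈ lattice d M) (hy' : y' ∈ lattice d M) : y + y' ∈ lattice d M := by
  obtain ⟨z, hz⟩ := hy
  obtain ⟨z', hz'⟩ := hy'
  refine ⟨z + z', ?_⟩
  rw [mulVecR, Matrix.mulVec_add, ← mulVecR, ← mulVecR, hz, hz']
  funext i
  simp

lemma neg_mem_lattice {M : Matrix (Fin d) (Fin d) ℤ} {y : Fin d → ℝ}
    (hy : y ∈ lattice d M) : -y ∈ lattice d M := by
  obtain ⟨z, hz⟩ := hy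
  refine ⟨-z, ?_⟩
  rw [mulVecR, Matrix.mulVec_neg, ← mulVecR, hz]
  funext i
  simp

lemma intCast_mem_lattice (M : Matrix (Fin d) (Fin d) ℤ) (z : Fin d → ℤ) :
    (fun i => (z i : ℝ)) ∈ lattice d M :=
  ⟨M *ᵥ z, (intCast_mulVec M z).symm⟩

lemma centeredFract_mem_pattern {M : Matrix (Fin d) (Fin d) ℤ} {v : Fin d → ℝ}
    (hv : v ∈ lattice d M) : centeredFract v ∈ pattern d M := by
  refine ⟨?_, centeredFract_mem_box v⟩
  rw [← sub_sub_cancel v (centeredFract v), sub_centeredFract, sub_eq_add_neg]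
  exact add_mem_lattice hv (neg_mem_lattice (intCast_mem_lattice M _))

lemma zero_mem_pattern (M : Matrix (Fin d) (Fin d) ℤ) : (0 : Fin d → ℝ) ∈ pattern d M :=
  ⟨⟨0, by ext; simp [mulVecR]⟩, fun _ => by norm_num⟩

lemma bijOn_centeredFract_add {M : Matrix (Fin d) (Fin d) ℤ} {y₀ : Fin d → ℝ}
    (hy₀ : y₀ ∈ lattice d M) :
    Set.BijOn (fun y => centeredFract (y + y₀)) (pattern d M) (pattern d M) := by
  have inv : ∀ w, ∀ y ∈ pattern d M, centeredFract (centeredFract (y + -w) + w) = y := by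
    intro w y hy
    rw [centeredFract_centeredFract_add, neg_add_cancel_right, centeredFract_eq_self hy.2]
  refine Set.InvOn.bijOn (f' := fun y => centeredFract (y + -y₀)) ⟨fun y hy => ?_, inv y₀⟩
    (fun y hy => centeredFract_mem_pattern (add_mem_lattice hy.1 hy₀))
    (fun y hy => centeredFract_mem_pattern (add_mem_lattice hy.1 (neg_mem_lattice hy₀)))
  simpa using inv (-y₀) y hy

lemma finsum_mem_pattern_add {α : Type*} [AddCommMonoid α] {M : Matrix (Fin d) (Fin d) ℤ}
    {f : (Fin d → ℝ) → α} (hf : ∀ y (z : Fin d → ℤ), f (y - fun i => (z i : ℝ)) = f y)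
    {y₀ : Fin d → ℝ} (hy₀ : y₀ ∈ lattice d M) :
    ∑ᶠ y ∈ pattern d M, f (y + y₀) = ∑ᶠ y ∈ pattern d M, f y :=
  finsum_mem_eq_of_bijOn _ (bijOn_centeredFract_add hy₀) fun y _ => by
    rw [← hf (y + y₀) (fun i => round ((y + y₀) i)), ← sub_centeredFract, sub_sub_cancel]

lemma isUnit_map_intCast {N : Matrix (Fin d) (Fin d) ℤ} (hN : N.det ≠ 0) :
    IsUnit (N.map (Int.cast : ℤ → ℝ)) := by
  rw [Matrix.isUnit_iff_isUnit_det, isUnit_iff_ne_zero,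
    show (N.map (Int.cast : ℤ → ℝ)).det = (N.det : ℝ) from ((Int.castRingHom ℝ).map_det N).symm]
  exact_mod_cast hN

lemma mulVecR_injective {N : Matrix (Fin d) (Fin d) ℤ} (hN : N.det ≠ 0) :
    Function.Injective (mulVecR d N) :=
  Matrix.mulVec_injective_iff_isUnit.2 (isUnit_map_intCast hN)

lemma abs_le_sum_abs_of_mem_box (N : Matrix (Fin d) (Fin d) ℤ) {y : Fin d → ℝ}
    (hy : ∀ i, y i ∈ Set.Ico (-(1/2) : ℝ) (1/2)) {h : Fin d → ℤ}
    (hh : (fun i => (h i : ℝ)) = mulVecR d N y) (i : Fin d) :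
    |h i| ≤ ∑ j, |N i j| := by
  have hyj (j : Fin d) : |y j| ≤ 1 := abs_le.2 ⟨by linarith [(hy j).1], by linarith [(hy j).2]⟩
  have : |(h i : ℝ)| ≤ ∑ j, |(N i j : ℝ)| := by
    rw [congrFun hh i]
    calc |mulVecR d N y i| = |∑ j, (N i j : ℝ) * y j| := rfl
      _ ≤ ∑ j, |(N i j : ℝ) * y j| := Finset.abs_sum_le_sum_abs _ _
      _ ≤ ∑ j, |(N i j : ℝ)| := Finset.sum_le_sum fun j _ => by
        simpa [abs_mul] using mul_le_of_le_one_right (abs_nonneg (N i j : ℝ)) (hyj j)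
  exact_mod_cast this

lemma genSet_finite (N : Matrix (Fin d) (Fin d) ℤ) : (genSet d N).Finite := by
  refine (Set.finite_Icc (-fun i => ∑ j, |N i j|) fun i => ∑ j, |N i j|).subset ?_
  rintro h ⟨y, hy, hh⟩
  exact ⟨fun i => neg_le_of_abs_le (abs_le_sum_abs_of_mem_box N hy hh i),
    fun i => le_of_abs_le (abs_le_sum_abs_of_mem_box N hy hh i)⟩

lemma mulVecR_mem_image_genSet {M : Matrix (Fin d) (Fin d) ℤ} {y : Fin d → ℝ}
    (hy : y ∈ pattern d M) :
    mulVecR d M y ∈ (fun h i => (h i : ℝ)) '' genSet d M := by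
  obtain ⟨⟨z, hz⟩, hbox⟩ := hy
  exact ⟨z, ⟨y, hbox, hz.symm⟩, hz.symm⟩

lemma pattern_finite {M : Matrix (Fin d) (Fin d) ℤ} (hM : M.det ≠ 0) : (pattern d M).Finite :=
  (((genSet_finite M).image _).preimage (mulVecR_injective hM).injOn).subset
    fun _ hy => mulVecR_mem_image_genSet hy

lemma dot_eq_dotProduct (k : Fin d → ℤ) (x : Fin d → ℝ) :
    dot d k x = (fun i => (k i : ℝ)) ⬝ᵥ x := rfl

lemma exists_eq_transpose_mulVec_of_dot_int {M : Matrix (Fin d) (Fin d) ℤ} (hM : M.det ≠ 0)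
    {k : Fin d → ℤ} (hk : ∀ y ∈ lattice d M, ∃ n : ℤ, dot d k y = n) :
    ∃ w, k = Mᵀ *ᵥ w := by
  set A := M.map (Int.cast : ℤ → ℝ)
  have hA : IsUnit A.det := (Matrix.isUnit_iff_isUnit_det A).1 (isUnit_map_intCast hM)
  have hcol (j : Fin d) : A⁻¹ *ᵥ Pi.single j 1 ∈ lattice d M := ⟨Pi.single j 1, by
    rw [mulVecR, Matrix.mulVec_mulVec, Matrix.mul_nonsing_inv _ hA, Matrix.one_mulVec]
    ext i
    simp [Pi.single_apply]⟩
  choose w hw using fun j => hk _ (hcol j)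
  have hkA : (fun i => (k i : ℝ)) ᵥ* A⁻¹ = fun j => (w j : ℝ) := funext fun j => by
    rw [← hw j, dot_eq_dotProduct, Matrix.dotProduct_mulVec, dotProduct_single_one]
  have hcast : (fun i => (k i : ℝ)) = fun i => ((Mᵀ *ᵥ w) i : ℝ) := by
    rw [intCast_mulVec, mulVecR, Matrix.transpose_map, Matrix.mulVec_transpose, ← hkA,
      Matrix.vecMul_vecMul, Matrix.nonsing_inv_mul _ hA, Matrix.vecMul_one]
  exact ⟨w, funext fun i => Int.cast_injective (congrFun hcast i)⟩

lemma eq_of_mem_genSet_of_sub_eq_mulVec {N : Matrix (Fin d) (Fin d) ℤ} (hN : N.det ≠ 0)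
    {h h' w : Fin d → ℤ} (hh : h ∈ genSet d N) (hh' : h' ∈ genSet d N)
    (hw : h - h' = N *ᵥ w) : h = h' := by
  obtain ⟨y, hy, hhy⟩ := hh
  obtain ⟨y', hy', hhy'⟩ := hh'
  have hyy' : y - y' = fun i => (w i : ℝ) := mulVecR_injective hN <| by
    rw [mulVecR, Matrix.mulVec_sub, ← mulVecR, ← mulVecR, ← hhy, ← hhy', ← intCast_mulVec, ← hw]
    funext i
    simp
  have hcast : (fun i => (h i : ℝ)) = fun i => (h' i : ℝ) := by
    rw [hhy, hhy', eq_of_mem_box_of_sub_eq_intCast hy hy' hyy']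
  exact funext fun i => Int.cast_injective (congrFun hcast i)

lemma exp_two_pi_I_mul_dot_sub_intCast (k z : Fin d → ℤ) (y : Fin d → ℝ) :
    exp (2 * π * I * (dot d k (y - fun i => (z i : ℝ)) : ℝ)) =
      exp (2 * π * I * (dot d k y : ℝ)) := by
  have hint : dot d k (fun i => (z i : ℝ)) = ((k ⬝ᵥ z : ℤ) : ℝ) := by
    simp [dot, dotProduct]
  rw [dot_eq_dotProduct, dotProduct_sub, ← dot_eq_dotProduct, ← dot_eq_dotProduct, hint,
    Complex.ofReal_sub, mul_sub, Complex.exp_sub, Complex.ofReal_intCast,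
    show 2 * π * I * ((k ⬝ᵥ z : ℤ) : ℂ) = (k ⬝ᵥ z : ℤ) * (2 * π * I) by ring,
    Complex.exp_int_mul_two_pi_mul_I, div_one]

lemma exp_two_pi_I_mul_ne_one {t : ℝ} (ht : ∀ n : ℤ, t ≠ n) : exp (2 * π * I * t) ≠ 1 := by
  rw [Ne, Complex.exp_eq_one_iff]
  rintro ⟨n, hn⟩
  refine ht n (Complex.ofReal_injective ?_)
  have h2πI : 2 * π * I ≠ 0 := by simp [Real.pi_ne_zero, Complex.I_ne_zero]
  rw [Complex.ofReal_intCast]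
  exact mul_right_cancel₀ h2πI (by rw [← hn]; ring)

lemma finsum_mem_pattern_exp_eq_zero {M : Matrix (Fin d) (Fin d) ℤ} (hM : M.det ≠ 0)
    {k : Fin d → ℤ} (hk : ∀ w, k ≠ Mᵀ *ᵥ w) :
    ∑ᶠ y ∈ pattern d M, exp (2 * π * I * (dot d k y : ℝ)) = 0 := by
  obtain ⟨y₀, hy₀, hnint⟩ : ∃ y₀ ∈ lattice d M, ∀ n : ℤ, dot d k y₀ ≠ n := by
    by_contra! h
    obtain ⟨w, hw⟩ := exists_eq_transpose_mulVec_of_dot_int hM h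
    exact hk w hw
  set S := ∑ᶠ y ∈ pattern d M, exp (2 * π * I * (dot d k y : ℝ))
  have hS : S = S * exp (2 * π * I * (dot d k y₀ : ℝ)) := by
    calc S = ∑ᶠ y ∈ pattern d M, exp (2 * π * I * (dot d k (y + y₀) : ℝ)) :=
          (finsum_mem_pattern_add (fun y z => exp_two_pi_I_mul_dot_sub_intCast k z y) hy₀).symm
      _ = ∑ᶠ y ∈ pattern d M, exp (2 * π * I * (dot d k y : ℝ)) *
            exp (2 * π * I * (dot d k y₀ : ℝ)) := by
          simp only [dot_eq_dotProduct, dotProduct_add, Complex.ofReal_add, mul_add,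
            Complex.exp_add]
      _ = _ := (finsum_mem_mul _ _).symm
  exact (mul_right_eq_self₀.1 hS.symm).resolve_left (exp_two_pi_I_mul_ne_one hnint)

lemma finsum_mem_pattern_exp_mul_exp_neg {M : Matrix (Fin d) (Fin d) ℤ} (hM : M.det ≠ 0)
    {h h' : Fin d → ℤ} (hh : h ∈ genSet d Mᵀ) (hh' : h' ∈ genSet d Mᵀ) :
    ∑ᶠ y ∈ pattern d M, exp (2 * π * I * (dot d h' y : ℝ)) * exp (-(2 * π * I) * (dot d h y : ℝ))
      = if h' = h then ((pattern d M).ncard : ℂ) else 0 := by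
  have hsub (y : Fin d → ℝ) : exp (2 * π * I * (dot d h' y : ℝ)) *
      exp (-(2 * π * I) * (dot d h y : ℝ)) = exp (2 * π * I * (dot d (h' - h) y : ℝ)) := by
    rw [← Complex.exp_add]
    simp only [dot, Pi.sub_apply, Int.cast_sub, sub_mul, Finset.sum_sub_distrib]
    push_cast
    ring_nf
  rw [finsum_mem_congr rfl fun y _ => hsub y]
  split_ifs with hhh
  · simp only [hhh, sub_self, dot, Pi.zero_apply, Int.cast_zero, zero_mul, Finset.sum_const_zero,
      Complex.ofReal_zero, mul_zero, Complex.exp_zero]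
    rw [← finsum_one, Nat.cast_finsum_mem (pattern_finite hM), Nat.cast_one]
  · refine finsum_mem_pattern_exp_eq_zero hM fun w hw => hhh ?_
    exact eq_of_mem_genSet_of_sub_eq_mulVec (by rwa [Matrix.det_transpose]) hh' hh hw

lemma exists_finsum_mem_pattern_mul_exp_eq {M : Matrix (Fin d) (Fin d) ℤ} (hM : M.det ≠ 0)
    (b : (Fin d → ℤ) → ℂ) :
    ∃ a : (Fin d → ℝ) → ℂ, ∀ h ∈ genSet d Mᵀ,
      ∑ᶠ y ∈ pattern d M, a y * exp (-(2 * π * I) * (dot d h y : ℝ)) = b h := by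
  set c : ℂ := ((pattern d M).ncard : ℂ)⁻¹
  have hc : ((pattern d M).ncard : ℂ) ≠ 0 := Nat.cast_ne_zero.2
    ((Set.ncard_pos (pattern_finite hM)).2 ⟨0, zero_mem_pattern M⟩).ne'
  refine ⟨fun y => c * ∑ᶠ h' ∈ genSet d Mᵀ, b h' * exp (2 * π * I * (dot d h' y : ℝ)),
    fun h hh => ?_⟩
  calc ∑ᶠ y ∈ pattern d M, (c * ∑ᶠ h' ∈ genSet d Mᵀ, b h' * exp (2 * π * I * (dot d h' y : ℝ)))
        * exp (-(2 * π * I) * (dot d h y : ℝ))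
      = ∑ᶠ y ∈ pattern d M, ∑ᶠ h' ∈ genSet d Mᵀ, c * b h' *
          (exp (2 * π * I * (dot d h' y : ℝ)) * exp (-(2 * π * I) * (dot d h y : ℝ))) :=
        finsum_mem_congr rfl fun y _ => by
          rw [mul_finsum_mem, finsum_mem_mul]
          exact finsum_mem_congr rfl fun _ _ => by ring
    _ = ∑ᶠ h' ∈ genSet d Mᵀ, c * b h' * ∑ᶠ y ∈ pattern d M,
          exp (2 * π * I * (dot d h' y : ℝ)) * exp (-(2 * π * I) * (dot d h y : ℝ)) := by
        rw [finsum_mem_comm _ (pattern_finite hM) (genSet_finite _)]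
        exact finsum_mem_congr rfl fun _ _ => (mul_finsum_mem _ _).symm
    _ = ∑ᶠ h' ∈ genSet d Mᵀ, if h' = h then b h' else 0 :=
        finsum_mem_congr rfl fun h' hh' => by
          rw [finsum_mem_pattern_exp_mul_exp_neg hM hh hh']
          split_ifs
          · rw [mul_right_comm, inv_mul_cancel₀ hc, one_mul]
          · rw [mul_zero]
    _ = b h := by
        rw [finsum_mem_eq_finite_toFinset_sum _ (genSet_finite _), Finset.sum_ite_eq']
        simp [hh]

lemma exp_I_mul_dot_sub_two_pi_smul (h : Fin d → ℤ) (x y : Fin d → ℝ) :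
    exp (I * (dot d h (x - (2 * π) • y) : ℝ)) =
      exp (-(2 * π * I) * (dot d h y : ℝ)) * exp (I * (dot d h x : ℝ)) := by
  rw [← Complex.exp_add, dot_eq_dotProduct, dotProduct_sub, dotProduct_smul, ← dot_eq_dotProduct,
    ← dot_eq_dotProduct, smul_eq_mul]
  push_cast
  ring_nf

lemma finsum_mem_pattern_mul_translate_dirichlet {M : Matrix (Fin d) (Fin d) ℤ}
    (hM : M.det ≠ 0) (a : (Fin d → ℝ) → ℂ) (x : Fin d → ℝ) :
    ∑ᶠ y ∈ pattern d M, a y * Tr d y (dirichlet d M) x =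
      ∑ᶠ h ∈ genSet d Mᵀ, (∑ᶠ y ∈ pattern d M, a y * exp (-(2 * π * I) * (dot d h y : ℝ))) *
        exp (I * (dot d h x : ℝ)) := by
  calc ∑ᶠ y ∈ pattern d M, a y * Tr d y (dirichlet d M) x
      = ∑ᶠ y ∈ pattern d M, ∑ᶠ h ∈ genSet d Mᵀ,
          a y * exp (-(2 * π * I) * (dot d h y : ℝ)) * exp (I * (dot d h x : ℝ)) :=
        finsum_mem_congr rfl fun y _ => by
          rw [Tr, dirichlet, mul_finsum_mem]
          exact finsum_mem_congr rfl fun h _ => by rw [exp_I_mul_dot_sub_two_pi_smul, ← mul_assoc]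
    _ = _ := by
        rw [finsum_mem_comm _ (pattern_finite hM) (genSet_finite _)]
        exact finsum_mem_congr rfl fun _ _ => (finsum_mem_mul _ _).symm

end

theorem spanTranslates_dirichlet_eq_trigPoly_general
    (d : ℕ)
    (M : Matrix (Fin d) (Fin d) ℤ) (hM : M.det ≠ 0) :
    spanTranslates d M (dirichlet d M) =
      {g | ∃ b : (Fin d → ℤ) → ℂ,
        g =ᵐ[volume.restrict (cube d)]
          fun x => ∑ᶠ h ∈ genSet d Mᵀ, b h * Complex.exp (Complex.I * (dot d h x : ℝ))} := by
  ext g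
  constructor
  · rintro ⟨a, ha⟩
    exact ⟨_, ha.trans (.of_eq (funext (finsum_mem_pattern_mul_translate_dirichlet hM a)))⟩
  · rintro ⟨b, hb⟩
    obtain ⟨a, ha⟩ := exists_finsum_mem_pattern_mul_exp_eq hM b
    refine ⟨a, hb.trans (.of_eq (funext fun x => ?_))⟩
    rw [finsum_mem_pattern_mul_translate_dirichlet hM]
    exact finsum_mem_congr rfl fun h hh => by rw [ha h hh]

/-- the span of Dirichlet kernel translates is the space of trigonometric
polynomials with frequencies in the generating set. -/
theorem spanTranslates_dirichlet_eq_trigPoly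
    (d : ℕ) (hd : 0 < d)
    (M : Matrix (Fin d) (Fin d) ℤ) (hM : M.det ≠ 0) :
    spanTranslates d M (dirichlet d M) =
      {g | ∃ b : (Fin d → ℤ) → ℂ,
        g =ᵐ[volume.restrict (cube d)]
          fun x => ∑ᶠ h ∈ genSet d Mᵀ, b h * Complex.exp (Complex.I * (dot d h x : ℝ))} :=
  spanTranslates_dirichlet_eq_trigPoly_general d M hM

end ElastFFT
end
end

section
/- Let C⁰ be a positive definite reference stiffness with the usual symmetries. Then for every k ∈ ℝ^d with k ≠ 0 and every u ∈ ℂ^d, the Green operator symbol recovers symmetrized gradients: Γ̂⁰_k : (C⁰ : Dₖu) = Dₖu, where Dₖu = (i/2)(k uᵀ + u kᵀ). -/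
open MeasureTheory Complex Matrix
open scoped BigOperators Classical

noncomputable section

namespace ElastFFT

variable (d : ℕ)

/-!
Since `A(k) = D_k* ∘ C⁰ ∘ D_k`, we get `Γ̂⁰_k (C⁰ : D_k u) = D_k (A(k)⁻¹ (A(k) u)) = D_k u` as soon as
`A(k)` is invertible. If `A(k) v = 0`, then `⟨C⁰ : D_k v, D_k v⟩ = ⟨A(k) v, v⟩ = 0`, so positive
definiteness gives `D_k v = 0`, and `D_k` is injective when `k ≠ 0`.
-/

section GreenOperator

variable {d}

def symGradₗ (k : Fin d → ℝ) : (Fin d → ℂ) →ₗ[ℂ] Matrix (Fin d) (Fin d) ℂ where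
  toFun := symGrad d k
  map_add' u v := by ext i j; simp only [symGrad, of_apply, Pi.add_apply, Matrix.add_apply]; ring
  map_smul' c u := by
    ext i j; simp only [symGrad, of_apply, Pi.smul_apply, Matrix.smul_apply, smul_eq_mul,
      RingHom.id_apply]; ring

def capplyₗ (C : Fin d → Fin d → Fin d → Fin d → ℝ) :
    Matrix (Fin d) (Fin d) ℂ →ₗ[ℂ] Matrix (Fin d) (Fin d) ℂ where
  toFun := capply d C
  map_add' A B := by
    ext i j; simp only [capply, of_apply, Matrix.add_apply, mul_add, Finset.sum_add_distrib]
  map_smul' c A := by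
    ext i j; simp only [capply, of_apply, Matrix.smul_apply, smul_eq_mul, RingHom.id_apply,
      Finset.mul_sum, mul_left_comm]

def symGradAdjₗ (k : Fin d → ℝ) : Matrix (Fin d) (Fin d) ℂ →ₗ[ℂ] (Fin d → ℂ) where
  toFun := symGradAdj d k
  map_add' A B := by
    funext j
    simp only [symGradAdj, Matrix.add_apply, Pi.add_apply, ← Finset.sum_add_distrib]
    exact Finset.sum_congr rfl fun i _ => by ring
  map_smul' c A := by
    funext j
    simp only [symGradAdj, Matrix.smul_apply, smul_eq_mul, Pi.smul_apply, RingHom.id_apply,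
      Finset.mul_sum]
    exact Finset.sum_congr rfl fun i _ => by ring

theorem acoustic_eq_toMatrix' (C : Fin d → Fin d → Fin d → Fin d → ℝ) (k : Fin d → ℝ) :
    acoustic d C k = LinearMap.toMatrix' (symGradAdjₗ k ∘ₗ capplyₗ C ∘ₗ symGradₗ k) := by
  ext i j
  rfl

theorem acoustic_mulVec (C : Fin d → Fin d → Fin d → Fin d → ℝ) (k : Fin d → ℝ)
    (u : Fin d → ℂ) :
    (acoustic d C k).mulVec u = symGradAdj d k (capply d C (symGrad d k u)) := by
  rw [acoustic_eq_toMatrix', ← Matrix.toLin'_apply, Matrix.toLin'_toMatrix']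
  rfl

theorem frobInner_symGrad (k : Fin d → ℝ) (A : Matrix (Fin d) (Fin d) ℂ) (u : Fin d → ℂ) :
    frobInner d A (symGrad d k u) = ∑ j, symGradAdj d k A j * starRingEnd ℂ (u j) := by
  simp only [frobInner, symGrad, symGradAdj, of_apply, map_mul, map_add, map_div₀, conj_I,
    conj_ofReal, map_ofNat, Finset.sum_mul, mul_add, add_mul, Finset.sum_add_distrib]
  congr 1
  · rw [Finset.sum_comm]
    exact Finset.sum_congr rfl fun _ _ => Finset.sum_congr rfl fun _ _ => by ring
  · exact Finset.sum_congr rfl fun _ _ => Finset.sum_congr rfl fun _ _ => by ring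

theorem symGrad_isSymm (k : Fin d → ℝ) (u : Fin d → ℂ) : (symGrad d k u).IsSymm := by
  ext i j
  simp only [symGrad, transpose_apply, of_apply]
  ring

theorem symGrad_eq_zero_iff {k : Fin d → ℝ} (hk : k ≠ 0) {u : Fin d → ℂ} :
    symGrad d k u = 0 ↔ u = 0 := by
  refine ⟨fun h => ?_, fun h => by ext i j; simp [h, symGrad]⟩
  obtain ⟨i, hi⟩ := Function.ne_iff.mp hk
  have hki : (k i : ℂ) ≠ 0 := by exact_mod_cast hi
  have entry : ∀ j, (k i : ℂ) * u j + u i * k j = 0 := fun j => by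
    simpa [symGrad, I_ne_zero] using congr_fun₂ h i j
  have hui : u i = 0 := by
    have := entry i
    rw [mul_comm (u i), ← two_mul] at this
    simpa [hki] using this
  funext j
  simpa [hui, hki] using entry j

theorem TensorPosDef.eq_zero_of_frobInner_re_nonpos {C : Fin d → Fin d → Fin d → Fin d → ℝ}
    (hC : TensorPosDef d C) {γ : Matrix (Fin d) (Fin d) ℂ} (hγ : γ.IsSymm)
    (hre : (frobInner d (capply d C γ) γ).re ≤ 0) : γ = 0 := by
  obtain ⟨c, hc, hcoer⟩ := hC
  have hrow_nonneg : ∀ i ∈ Finset.univ, 0 ≤ ∑ j, normSq (γ i j) :=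
    fun i _ => Finset.sum_nonneg fun j _ => normSq_nonneg (γ i j)
  have hsum : ∑ i, ∑ j, normSq (γ i j) = 0 :=
    (nonpos_of_mul_nonpos_right ((hcoer γ hγ).trans hre) hc).antisymm
      (Finset.sum_nonneg hrow_nonneg)
  ext i j
  have hrow : ∑ j, normSq (γ i j) = 0 :=
    (Finset.sum_eq_zero_iff_of_nonneg hrow_nonneg).mp hsum i (Finset.mem_univ i)
  exact normSq_eq_zero.mp ((Finset.sum_eq_zero_iff_of_nonneg fun j _ =>
    normSq_nonneg (γ i j)).mp hrow j (Finset.mem_univ j))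

theorem isUnit_det_acoustic {C : Fin d → Fin d → Fin d → Fin d → ℝ} (hC : TensorPosDef d C)
    {k : Fin d → ℝ} (hk : k ≠ 0) : IsUnit (acoustic d C k).det := by
  rw [isUnit_iff_ne_zero]
  intro hdet
  obtain ⟨v, hv, hAv⟩ := Matrix.exists_mulVec_eq_zero_iff.mpr hdet
  have henergy : frobInner d (capply d C (symGrad d k v)) (symGrad d k v) = 0 := by
    rw [frobInner_symGrad, ← acoustic_mulVec, hAv]
    simp
  have hDv : symGrad d k v = 0 :=
    hC.eq_zero_of_frobInner_re_nonpos (symGrad_isSymm k v) (by rw [henergy, zero_re])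
  exact hv ((symGrad_eq_zero_iff hk).mp hDv)

end GreenOperator

theorem greenSym_recovers_symGrad_general
    (d : ℕ)
    (C0 : Fin d → Fin d → Fin d → Fin d → ℝ)
    (hC0pos : TensorPosDef d C0)
    (k : Fin d → ℝ) (hk : k ≠ 0) (u : Fin d → ℂ) :
    greenSymR d C0 k (capply d C0 (symGrad d k u)) = symGrad d k u := by
  rw [greenSymR, ← acoustic_mulVec, mulVec_mulVec,
    nonsing_inv_mul _ (isUnit_det_acoustic hC0pos hk), one_mulVec]

/-- the Green operator symbol recovers symmetrised gradients. -/
theorem greenSym_recovers_symGrad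
    (d : ℕ) (hd : 0 < d)
    (C0 : Fin d → Fin d → Fin d → Fin d → ℝ)
    (hC0symm : TensorSymm d C0) (hC0pos : TensorPosDef d C0)
    (k : Fin d → ℝ) (hk : k ≠ 0) (u : Fin d → ℂ) :
    greenSymR d C0 k (capply d C0 (symGrad d k u)) = symGrad d k u :=
  greenSym_recovers_symGrad_general d C0 hC0pos k hk u

end ElastFFT
end
end
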